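/- For 0 < q, μ, y < 1, set η_m = (y;q)_m/(μy;q)_m for m ∈ ℤ_{≥0} ∪ {∞} (with η_∞ = (y;q)_∞/(μy;q)_∞). Then 1 = η_0 > η_1 > η_2 > ··· ≥ η_∞ > 0, and for every n ≥ 0, lim_{L→∞} ∑_{m ≥ 0} q^{mn}(η_m^L − δ_{n,0} η_∞^L) = 1. -/

import Mathlib

noncomputable def qPoch (z q : ℝ) (m : ℕ) : ℝ := ∏ j ∈ Finset.range m, (1 - z * q ^ j)

noncomputable def qPochInf (z q : ℝ) : ℝ := ∏' j : ℕ, (1 - z * q ^ j)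

noncomputable def eta (q μ y : ℝ) (m : ℕ) : ℝ := qPoch y q m / qPoch (μ * y) q m

noncomputable def etaInf (q μ y : ℝ) : ℝ := qPochInf y q / qPochInf (μ * y) q

/-!
With `r_j = (1 - y qʲ) / (1 - μ y qʲ) ∈ (0, 1)` we have `η_{m+1} = η_m r_m`, so `η` decreases
strictly, and `η_m → η_∞ > 0` because both q-Pochhammer products have summable logarithms.
Since `1 - r_m ≤ y qᵐ`, the gap `η_m - η_∞` is `O(qᵐ)`. The limit in `L` is dominated
convergence for series (Tannery's theorem): `η_mᴸ → δ_{m,0}`, the terms are dominated by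
`q^{mn}` when `n ≥ 1`, and when `n = 0` by `(η_m - η_∞) / (1 - η_1)` for `m ≥ 1`, using
`(1 - a)(aᴸ - bᴸ) ≤ a - b` for `0 ≤ b ≤ a ≤ 1`.
-/

open Filter Topology Real

lemma one_sub_mul_pow_pos {z q : ℝ} (hz : z < 1) (hq0 : 0 ≤ q) (hq1 : q ≤ 1) (j : ℕ) :
    0 < 1 - z * q ^ j := by
  have h0 := pow_nonneg hq0 j
  have h1 := pow_le_one₀ hq0 hq1 (n := j)
  rcases le_or_gt z 0 with hz0 | hz0 <;> nlinarith

lemma qPoch_pos {z q : ℝ} (hz : z < 1) (hq0 : 0 ≤ q) (hq1 : q ≤ 1) (m : ℕ) :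
    0 < qPoch z q m :=
  Finset.prod_pos fun j _ => one_sub_mul_pow_pos hz hq0 hq1 j

lemma summable_log_one_sub_mul_pow {z q : ℝ} (hq0 : 0 ≤ q) (hq1 : q < 1) :
    Summable fun j : ℕ => log (1 - z * q ^ j) := by
  simpa [sub_eq_add_neg] using
    Real.summable_log_one_add_of_summable ((summable_geometric_of_lt_one hq0 hq1).mul_left (-z))

lemma qPochInf_pos {z q : ℝ} (hz : z < 1) (hq0 : 0 ≤ q) (hq1 : q < 1) : 0 < qPochInf z q := by
  rw [qPochInf, ← Real.rexp_tsum_eq_tprod (one_sub_mul_pow_pos hz hq0 hq1.le)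
    (summable_log_one_sub_mul_pow hq0 hq1)]
  exact exp_pos _

lemma tendsto_qPoch_qPochInf {z q : ℝ} (hz : z < 1) (hq0 : 0 ≤ q) (hq1 : q < 1) :
    Tendsto (qPoch z q) atTop (𝓝 (qPochInf z q)) :=
  (Real.multipliable_of_summable_log (one_sub_mul_pow_pos hz hq0 hq1.le)
    (summable_log_one_sub_mul_pow hq0 hq1)).hasProd.tendsto_prod_nat

lemma one_sub_le_div_one_sub_mul {a μ : ℝ} (ha0 : 0 ≤ a) (ha1 : a < 1) (hμ0 : 0 ≤ μ)
    (hμa : μ * a < 1) : 1 - a ≤ (1 - a) / (1 - μ * a) := by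
  rw [le_div_iff₀ (by linarith)]
  nlinarith [mul_nonneg hμ0 ha0]

lemma div_one_sub_mul_lt_one {a μ : ℝ} (ha0 : 0 < a) (hμ1 : μ < 1) (hμa : μ * a < 1) :
    (1 - a) / (1 - μ * a) < 1 := by
  rw [div_lt_one (by linarith)]
  nlinarith

lemma one_sub_mul_pow_sub_pow_le {a b : ℝ} (hb : 0 ≤ b) (hba : b ≤ a) (ha : a ≤ 1) (L : ℕ) :
    (1 - a) * (a ^ L - b ^ L) ≤ a - b := by
  induction L with
  | zero => simpa using hba
  | succ L ih =>
    have hbL : b ^ L ≤ 1 := pow_le_one₀ hb (hba.trans ha)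
    calc (1 - a) * (a ^ (L + 1) - b ^ (L + 1))
        = a * ((1 - a) * (a ^ L - b ^ L)) + (1 - a) * (a - b) * b ^ L := by ring
      _ ≤ a * (a - b) + (1 - a) * (a - b) * 1 := by
        gcongr
        linarith
      _ = a - b := by ring

section eta

variable {q μ y : ℝ}

lemma eta_zero : eta q μ y 0 = 1 := by
  simp [eta, qPoch]

lemma eta_succ (m : ℕ) :
    eta q μ y (m + 1) = eta q μ y m * ((1 - y * q ^ m) / (1 - μ * y * q ^ m)) := by
  simp only [eta, qPoch, Finset.prod_range_succ, div_mul_div_comm]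

lemma eta_pos (hq0 : 0 ≤ q) (hq1 : q ≤ 1) (hμy : μ * y < 1) (hy1 : y < 1) (m : ℕ) :
    0 < eta q μ y m :=
  div_pos (qPoch_pos hy1 hq0 hq1 m) (qPoch_pos hμy hq0 hq1 m)

lemma strictAnti_eta (hq0 : 0 < q) (hq1 : q ≤ 1) (hμ1 : μ < 1) (hy0 : 0 < y) (hy1 : y < 1) :
    StrictAnti (eta q μ y) := by
  refine strictAnti_nat_of_succ_lt fun m => ?_
  have hμy : μ * y < 1 := by nlinarith
  have hyq : 0 < y * q ^ m := mul_pos hy0 (pow_pos hq0 m)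
  have hμyq : μ * (y * q ^ m) < 1 := by
    have := one_sub_mul_pow_pos hμy hq0.le hq1 m
    linarith [mul_assoc μ y (q ^ m)]
  rw [eta_succ, mul_assoc μ y]
  exact mul_lt_of_lt_one_right (eta_pos hq0.le hq1 hμy hy1 m)
    (div_one_sub_mul_lt_one hyq hμ1 hμyq)

lemma eta_le_one (hq0 : 0 < q) (hq1 : q ≤ 1) (hμ1 : μ < 1) (hy0 : 0 < y) (hy1 : y < 1)
    (m : ℕ) : eta q μ y m ≤ 1 := by
  simpa [eta_zero] using (strictAnti_eta hq0 hq1 hμ1 hy0 hy1).antitone (Nat.zero_le m)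

lemma eta_lt_one (hq0 : 0 < q) (hq1 : q ≤ 1) (hμ1 : μ < 1) (hy0 : 0 < y) (hy1 : y < 1)
    {m : ℕ} (hm : m ≠ 0) : eta q μ y m < 1 := by
  simpa [eta_zero] using strictAnti_eta hq0 hq1 hμ1 hy0 hy1 (Nat.pos_of_ne_zero hm)

lemma eta_sub_eta_succ_le (hq0 : 0 < q) (hq1 : q ≤ 1) (hμ0 : 0 ≤ μ) (hμ1 : μ < 1) (hy0 : 0 < y)
    (hy1 : y < 1) (m : ℕ) : eta q μ y m - eta q μ y (m + 1) ≤ y * q ^ m := by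
  set r := (1 - y * q ^ m) / (1 - μ * y * q ^ m)
  have hyq0 : 0 < y * q ^ m := mul_pos hy0 (pow_pos hq0 m)
  have hyq1 : y * q ^ m < 1 := by linarith [one_sub_mul_pow_pos hy1 hq0.le hq1 m]
  have hμyq : μ * (y * q ^ m) < 1 := by nlinarith
  have hr_ge : 1 - y * q ^ m ≤ r := by
    simpa only [r, mul_assoc] using one_sub_le_div_one_sub_mul hyq0.le hyq1 hμ0 hμyq
  have hr_lt : r < 1 := by
    simpa only [r, mul_assoc] using div_one_sub_mul_lt_one hyq0 hμ1 hμyq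
  calc eta q μ y m - eta q μ y (m + 1) = eta q μ y m * (1 - r) := by rw [eta_succ]; ring
    _ ≤ 1 * (1 - r) :=
      mul_le_mul_of_nonneg_right (eta_le_one hq0 hq1 hμ1 hy0 hy1 m) (by linarith)
    _ ≤ y * q ^ m := by linarith

lemma tendsto_eta_etaInf (hq0 : 0 ≤ q) (hq1 : q < 1) (hμy : μ * y < 1) (hy1 : y < 1) :
    Tendsto (eta q μ y) atTop (𝓝 (etaInf q μ y)) :=
  (tendsto_qPoch_qPochInf hy1 hq0 hq1).div (tendsto_qPoch_qPochInf hμy hq0 hq1)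
    (qPochInf_pos hμy hq0 hq1).ne'

lemma etaInf_pos (hq0 : 0 ≤ q) (hq1 : q < 1) (hμy : μ * y < 1) (hy1 : y < 1) :
    0 < etaInf q μ y :=
  div_pos (qPochInf_pos hy1 hq0 hq1) (qPochInf_pos hμy hq0 hq1)

lemma etaInf_le_eta (hq0 : 0 < q) (hq1 : q < 1) (hμ1 : μ < 1) (hy0 : 0 < y) (hy1 : y < 1)
    (m : ℕ) : etaInf q μ y ≤ eta q μ y m :=
  (strictAnti_eta hq0 hq1.le hμ1 hy0 hy1).antitone.le_of_tendsto
    (tendsto_eta_etaInf hq0.le hq1 (by nlinarith) hy1) m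

/-- Since `η_k - η_{k+1} ≤ y qᵏ`, the sequence `η_k - y qᵏ / (1 - q)` increases to `η_∞`. -/
lemma eta_sub_etaInf_le (hq0 : 0 < q) (hq1 : q < 1) (hμ0 : 0 ≤ μ) (hμ1 : μ < 1) (hy0 : 0 < y)
    (hy1 : y < 1) (m : ℕ) : eta q μ y m - etaInf q μ y ≤ y / (1 - q) * q ^ m := by
  have hmono : Monotone fun k => eta q μ y k - y / (1 - q) * q ^ k := by
    refine monotone_nat_of_le_succ fun k => ?_
    have hstep := eta_sub_eta_succ_le hq0 hq1.le hμ0 hμ1 hy0 hy1 k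
    have hq : y / (1 - q) * q ^ k - y / (1 - q) * q ^ (k + 1) = y * q ^ k := by
      field_simp [(by linarith : (1 - q) ≠ 0)]
      ring
    linarith
  have hlim : Tendsto (fun k => eta q μ y k - y / (1 - q) * q ^ k) atTop
      (𝓝 (etaInf q μ y - y / (1 - q) * 0)) :=
    (tendsto_eta_etaInf hq0.le hq1 (by nlinarith) hy1).sub
      ((tendsto_pow_atTop_nhds_zero_of_lt_one hq0.le hq1).const_mul _)
  rw [mul_zero, sub_zero] at hlim
  linarith [hmono.ge_of_tendsto hlim m]

lemma tendsto_eta_pow (hq0 : 0 < q) (hq1 : q ≤ 1) (hμ1 : μ < 1) (hy0 : 0 < y) (hy1 : y < 1)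
    (m : ℕ) : Tendsto (fun L : ℕ => eta q μ y m ^ L) atTop (𝓝 (if m = 0 then 1 else 0)) := by
  rcases eq_or_ne m 0 with rfl | hm
  · simp [eta_zero]
  · rw [if_neg hm]
    exact tendsto_pow_atTop_nhds_zero_of_lt_one (eta_pos hq0.le hq1 (by nlinarith) hy1 m).le
      (eta_lt_one hq0 hq1 hμ1 hy0 hy1 hm)

lemma tendsto_tsum_pow_mul_eta_pow (hq0 : 0 < q) (hq1 : q < 1) (hμ1 : μ < 1) (hy0 : 0 < y)
    (hy1 : y < 1) {n : ℕ} (hn : n ≠ 0) :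
    Tendsto (fun L : ℕ => ∑' m : ℕ, q ^ (m * n) * eta q μ y m ^ L) atTop (𝓝 1) := by
  have hsum : Summable fun m : ℕ => q ^ (m * n) := by
    simpa only [mul_comm _ n, pow_mul] using
      summable_geometric_of_lt_one (pow_nonneg hq0.le n) (pow_lt_one₀ hq0.le hq1 hn)
  have hbound (L m : ℕ) : ‖q ^ (m * n) * eta q μ y m ^ L‖ ≤ q ^ (m * n) := by
    have hη : 0 ≤ eta q μ y m := (eta_pos hq0.le hq1.le (by nlinarith) hy1 m).le
    rw [Real.norm_of_nonneg (by positivity)]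
    exact mul_le_of_le_one_right (by positivity)
      (pow_le_one₀ hη (eta_le_one hq0 hq1.le hμ1 hy0 hy1 m))
  simpa using tendsto_tsum_of_dominated_convergence hsum
    (fun m => (tendsto_eta_pow hq0 hq1.le hμ1 hy0 hy1 m).const_mul (q ^ (m * n)))
    (Eventually.of_forall hbound)

lemma one_sub_eta_one_mul_pow_sub_etaInf_pow_le (hq0 : 0 < q) (hq1 : q < 1) (hμ0 : 0 ≤ μ)
    (hμ1 : μ < 1) (hy0 : 0 < y) (hy1 : y < 1) {m : ℕ} (hm : m ≠ 0) (L : ℕ) :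
    (1 - eta q μ y 1) * (eta q μ y m ^ L - etaInf q μ y ^ L) ≤ y / (1 - q) * q ^ m := by
  have hinf_pos : 0 < etaInf q μ y := etaInf_pos hq0.le hq1 (by nlinarith) hy1
  have hinf_le := etaInf_le_eta hq0 hq1 hμ1 hy0 hy1 m
  have hm_le : eta q μ y m ≤ eta q μ y 1 :=
    (strictAnti_eta hq0 hq1.le hμ1 hy0 hy1).antitone (Nat.one_le_iff_ne_zero.2 hm)
  calc (1 - eta q μ y 1) * (eta q μ y m ^ L - etaInf q μ y ^ L)
      ≤ (1 - eta q μ y m) * (eta q μ y m ^ L - etaInf q μ y ^ L) :=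
        mul_le_mul_of_nonneg_right (by linarith)
          (sub_nonneg.2 (pow_le_pow_left₀ hinf_pos.le hinf_le L))
    _ ≤ eta q μ y m - etaInf q μ y :=
        one_sub_mul_pow_sub_pow_le hinf_pos.le hinf_le (eta_le_one hq0 hq1.le hμ1 hy0 hy1 m) L
    _ ≤ y / (1 - q) * q ^ m := eta_sub_etaInf_le hq0 hq1 hμ0 hμ1 hy0 hy1 m

lemma tendsto_tsum_eta_pow_sub_etaInf_pow (hq0 : 0 < q) (hq1 : q < 1) (hμ0 : 0 ≤ μ)
    (hμ1 : μ < 1) (hy0 : 0 < y) (hy1 : y < 1) :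
    Tendsto (fun L : ℕ => ∑' m : ℕ, (eta q μ y m ^ L - etaInf q μ y ^ L)) atTop (𝓝 1) := by
  have heta_one : eta q μ y 1 < 1 := eta_lt_one hq0 hq1.le hμ1 hy0 hy1 one_ne_zero
  have hinf_pos : 0 < etaInf q μ y := etaInf_pos hq0.le hq1 (by nlinarith) hy1
  have hinf_le := etaInf_le_eta hq0 hq1 hμ1 hy0 hy1
  set K := y / (1 - q) / (1 - eta q μ y 1)
  have hbound (L m : ℕ) : ‖eta q μ y m ^ L - etaInf q μ y ^ L‖ ≤
      Function.update (fun m => K * q ^ m) 0 1 m := by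
    rw [Real.norm_of_nonneg (sub_nonneg.2 (pow_le_pow_left₀ hinf_pos.le (hinf_le m) L)),
      Function.update_apply]
    split_ifs with hm
    · subst hm
      rw [eta_zero, one_pow]
      linarith [pow_nonneg hinf_pos.le L]
    · rw [div_mul_eq_mul_div, le_div_iff₀ (by linarith), mul_comm]
      exact one_sub_eta_one_mul_pow_sub_etaInf_pow_le hq0 hq1 hμ0 hμ1 hy0 hy1 hm L
  have hlim (m : ℕ) : Tendsto (fun L : ℕ => eta q μ y m ^ L - etaInf q μ y ^ L) atTop
      (𝓝 ((if m = 0 then 1 else 0) - 0)) :=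
    (tendsto_eta_pow hq0 hq1.le hμ1 hy0 hy1 m).sub
      (tendsto_pow_atTop_nhds_zero_of_lt_one hinf_pos.le ((hinf_le 1).trans_lt heta_one))
  simpa using tendsto_tsum_of_dominated_convergence
    (((summable_geometric_of_lt_one hq0.le hq1).mul_left K).update 0 1) hlim
    (Eventually.of_forall hbound)

end eta

theorem eta_monotone_and_limit (q μ y : ℝ)
    (hq0 : 0 < q) (hq1 : q < 1) (hμ0 : 0 < μ) (hμ1 : μ < 1) (hy0 : 0 < y) (hy1 : y < 1) :
    eta q μ y 0 = 1 ∧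
    (∀ m : ℕ, eta q μ y (m + 1) < eta q μ y m) ∧
    (∀ m : ℕ, etaInf q μ y ≤ eta q μ y m) ∧
    0 < etaInf q μ y ∧
    ∀ n : ℕ,
      Filter.Tendsto
        (fun L : ℕ => ∑' m : ℕ,
          q ^ (m * n) * ((eta q μ y m) ^ L - (if n = 0 then (etaInf q μ y) ^ L else 0)))
        Filter.atTop (nhds 1) := by
  refine ⟨eta_zero, fun m => strictAnti_eta hq0 hq1.le hμ1 hy0 hy1 m.lt_succ_self,
    etaInf_le_eta hq0 hq1 hμ1 hy0 hy1, etaInf_pos hq0.le hq1 (by nlinarith) hy1, fun n => ?_⟩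
  rcases eq_or_ne n 0 with rfl | hn
  · simpa using tendsto_tsum_eta_pow_sub_etaInf_pow hq0 hq1 hμ0.le hμ1 hy0 hy1
  · simpa [hn] using tendsto_tsum_pow_mul_eta_pow hq0 hq1 hμ1 hy0 hy1 hn
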